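/- arXiv:1806.01919 — 3 statements merged into one kernel-verified Lean document; each statement's English description precedes it below -/
import Mathlib

section
/- Random inversion sort, upper bound: There is a constant C > 0 such that the following holds for every n ≥ 2 and every initial array A of length n with entries from a linearly ordered set. Consider the random process that, in each iteration, chooses an unordered pair of two distinct positions of the array uniformly at random and swaps the entries at those positions if and only if they are out of order (the entry at the smaller position is strictly larger than the entry at the larger position). Let T be the first iteration after which the array contains no inversion. Then E[T] ≤ C · n² · ln n. -/
/-!
Let `N t` be the number of inversions at time `t`. The pair drawn at time `t` is independent of
the array at time `t`, so each current inversion is chosen with probability `1 / M`,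
`M = n.choose 2`, and swapping it removes at least one inversion. Hence
`E[N (t + 1)] ≤ (1 - 1/M) E[N t]` and `E[N t] ≤ M (1 - 1/M)^t`. By Markov's inequality
`P(T > t) ≤ min 1 (M (1 - 1/M)^t)`; summing over `t` gives `E[T] ≤ ⌈M log M⌉ + M = O(n² log n)`.
-/

set_option autoImplicit false

open MeasureTheory ProbabilityTheory

/-- The first-hitting time of the time-dependent predicate `P` (valued in `ℝ≥0∞`,
so that it is `∞` when `P` is never satisfied). -/
noncomputable def hitTime {Ω : Type*} (P : ℕ → Ω → Prop) (ω : Ω) : ENNReal :=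
  sInf {t : ENNReal | ∃ n : ℕ, t = n ∧ P n ω}

open Finset
open scoped ENNReal

section Inversions

variable {n : ℕ} {α : Type*} [LinearOrder α]

def inversions (a : Fin n → α) : Finset (Fin n × Fin n) :=
  {p | p.1 < p.2 ∧ a p.2 < a p.1}

@[simp] lemma mem_inversions {a : Fin n → α} {p : Fin n × Fin n} :
    p ∈ inversions a ↔ p.1 < p.2 ∧ a p.2 < a p.1 := by simp [inversions]

lemma inversions_eq_empty_iff {a : Fin n → α} : inversions a = ∅ ↔ Monotone a := by
  simp [eq_empty_iff_forall_notMem, monotone_iff_forall_lt, le_iff_lt_or_eq]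

lemma card_inversions_le (a : Fin n → α) : #(inversions a) ≤ n.choose 2 := by
  have h := card_product_filter_lt (s := (univ : Finset (Fin n)))
  rw [card_univ, Fintype.card_fin] at h
  exact h ▸ card_le_card fun p hp => by simp_all

lemma card_inversions_comp_swap_lt {a : Fin n → α} {i j : Fin n} (hij : i < j) (h : a j < a i) :
    #(inversions (a ∘ Equiv.swap i j)) < #(inversions a) := by
  set σ := Equiv.swap i j
  -- `φ` maps the inversions of `a ∘ σ` to those of `a` other than `(i, j)`: pairs sticking out
  -- of `[i, j]` move with the swap, pairs inside it stay (there the swap only removes inversions).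
  let φ : Fin n × Fin n → Fin n × Fin n := fun p => if p.1 < i ∨ j < p.2 then (σ p.1, σ p.2) else p
  have hφ : Function.Involutive φ := fun p => by grind
  have hmem : (i, j) ∈ inversions a := mem_inversions.2 ⟨hij, h⟩
  calc #(inversions (a ∘ σ)) ≤ #((inversions a).erase (i, j)) := by
        refine card_le_card_of_injOn φ (fun p hp => ?_) hφ.injective.injOn
        simp only [coe_erase, Set.mem_sdiff, mem_coe, mem_inversions, Function.comp_apply,
          Set.mem_singleton_iff] at hp ⊢
        grind
    _ < #(inversions a) := card_erase_lt_of_mem hmem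

def sortStep (a : Fin n → α) (p : Fin n × Fin n) : Fin n → α :=
  if a p.2 < a p.1 then a ∘ Equiv.swap p.1 p.2 else a

lemma card_inversions_sortStep_add_le (a : Fin n → α) {p : Fin n × Fin n} (hp : p.1 < p.2) :
    #(inversions (sortStep a p)) + (if p ∈ inversions a then 1 else 0) ≤ #(inversions a) := by
  by_cases h : a p.2 < a p.1
  · simpa [sortStep, h, hp] using card_inversions_comp_swap_lt hp h
  · simp [sortStep, h]

end Inversions

section HittingTime

lemma one_sub_inv_pow_ceil_mul_log_le {x : ℝ} (hx : 1 ≤ x) :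
    (1 - x⁻¹) ^ ⌈x * Real.log x⌉₊ ≤ x⁻¹ := by
  have hx0 : 0 < x := by linarith
  calc (1 - x⁻¹) ^ ⌈x * Real.log x⌉₊ ≤ Real.exp (-x⁻¹) ^ ⌈x * Real.log x⌉₊ := by
        gcongr
        · simpa using inv_le_one_of_one_le₀ hx
        · exact Real.one_sub_le_exp_neg _
    _ = Real.exp (-(⌈x * Real.log x⌉₊ * x⁻¹)) := by rw [← Real.exp_nat_mul]; ring_nf
    _ ≤ Real.exp (-Real.log x) := by
        gcongr
        calc Real.log x = x * Real.log x * x⁻¹ := by field_simp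
          _ ≤ _ := by gcongr; exact Nat.le_ceil _
    _ = x⁻¹ := by rw [Real.exp_neg, Real.exp_log hx0]

lemma tsum_min_one_mul_geometric_le {M : ℕ} (hM : 0 < M) :
    ∑' t, min 1 ((M : ℝ≥0∞) * (1 - (M : ℝ≥0∞)⁻¹) ^ t) ≤ (⌈M * Real.log M⌉₊ : ℝ≥0∞) + M := by
  set r : ℝ≥0∞ := 1 - (M : ℝ≥0∞)⁻¹
  set t₀ := ⌈M * Real.log M⌉₊
  have hM1 : (1 : ℝ) ≤ M := by exact_mod_cast hM
  have hr : r ^ t₀ ≤ (M : ℝ≥0∞)⁻¹ := by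
    have : r = ENNReal.ofReal (1 - (M : ℝ)⁻¹) := by
      rw [ENNReal.ofReal_sub _ (by positivity), ENNReal.ofReal_one, ENNReal.ofReal_inv_of_pos
        (by positivity), ENNReal.ofReal_natCast]
    rw [this, ← ENNReal.ofReal_pow (by simpa using inv_le_one_of_one_le₀ hM1),
      ← ENNReal.ofReal_natCast, ← ENNReal.ofReal_inv_of_pos (by positivity)]
    exact ENNReal.ofReal_le_ofReal (one_sub_inv_pow_ceil_mul_log_le hM1)
  have h1r : (1 - r)⁻¹ = M := by
    rw [ENNReal.sub_sub_cancel ENNReal.one_ne_top (ENNReal.inv_le_one.2 (by exact_mod_cast hM)),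
      inv_inv]
  rw [← ENNReal.summable.sum_add_tsum_nat_add' (k := t₀)]
  gcongr
  · calc ∑ t ∈ range t₀, min 1 ((M : ℝ≥0∞) * r ^ t) ≤ ∑ _t ∈ range t₀, 1 :=
          sum_le_sum fun t _ => min_le_left _ _
      _ = t₀ := by simp
  · calc ∑' t, min 1 ((M : ℝ≥0∞) * r ^ (t + t₀)) ≤ ∑' t, (M : ℝ≥0∞) * r ^ t₀ * r ^ t :=
          ENNReal.tsum_le_tsum fun t => (min_le_right _ _).trans_eq (by ring)
      _ = M * r ^ t₀ * M := by rw [ENNReal.tsum_mul_left, ENNReal.tsum_geometric, h1r]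
      _ ≤ M * (M : ℝ≥0∞)⁻¹ * M := by gcongr
      _ = M := by rw [ENNReal.mul_inv_cancel (by exact_mod_cast hM.ne') (by simp), one_mul]

lemma hitTime_le_tsum_indicator {Ω : Type*} (P : ℕ → Ω → Prop) (ω : Ω) :
    hitTime P ω ≤ ∑' t, {ω | ¬ P t ω}.indicator 1 ω := by
  classical
  by_cases hP : ∃ t, P t ω
  · calc hitTime P ω ≤ Nat.find hP := sInf_le ⟨_, rfl, Nat.find_spec hP⟩
      _ = ∑ t ∈ range (Nat.find hP), {ω | ¬ P t ω}.indicator 1 ω := by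
          rw [sum_congr rfl fun t ht => Set.indicator_of_mem
            (Nat.find_min hP (mem_range.1 ht)) _]
          simp
      _ ≤ _ := ENNReal.sum_le_tsum _
  · push Not at hP
    simp [Set.indicator_of_mem, hP]

lemma lintegral_hitTime_le_tsum_measure {Ω : Type*} [MeasurableSpace Ω] {μ : Measure Ω}
    {P : ℕ → Ω → Prop} (hP : ∀ t, MeasurableSet {ω | ¬ P t ω}) :
    ∫⁻ ω, hitTime P ω ∂μ ≤ ∑' t, μ {ω | ¬ P t ω} :=
  calc ∫⁻ ω, hitTime P ω ∂μ ≤ ∫⁻ ω, ∑' t, {ω | ¬ P t ω}.indicator 1 ω ∂μ :=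
        lintegral_mono (hitTime_le_tsum_indicator P)
    _ = ∑' t, μ {ω | ¬ P t ω} := by
        rw [lintegral_tsum fun t => (measurable_one.indicator (hP t)).aemeasurable]
        simp_rw [lintegral_indicator_one (hP _)]

lemma lintegral_hitTime_le_of_drift {Ω : Type*} [MeasurableSpace Ω] {μ : Measure Ω}
    [IsProbabilityMeasure μ] {N : ℕ → Ω → ℕ} {M : ℕ} (hM : 0 < M) (hN : ∀ t, Measurable (N t))
    (hNM : ∀ t ω, N t ω ≤ M)
    (hdrift : ∀ t, ∫⁻ ω, (N (t + 1) ω : ℝ≥0∞) ∂μ ≤ (1 - (M : ℝ≥0∞)⁻¹) * ∫⁻ ω, (N t ω : ℝ≥0∞) ∂μ) :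
    ∫⁻ ω, hitTime (fun t ω => N t ω = 0) ω ∂μ ≤ (⌈M * Real.log M⌉₊ : ℝ≥0∞) + M := by
  have hexp : ∀ t, ∫⁻ ω, (N t ω : ℝ≥0∞) ∂μ ≤ M * (1 - (M : ℝ≥0∞)⁻¹) ^ t := by
    intro t
    induction t with
    | zero =>
      simpa using lintegral_mono (μ := μ) fun ω => (Nat.cast_le (α := ℝ≥0∞)).2 (hNM 0 ω)
    | succ t ih => calc
      _ ≤ (1 - (M : ℝ≥0∞)⁻¹) * (M * (1 - (M : ℝ≥0∞)⁻¹) ^ t) := (hdrift t).trans (by gcongr)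
      _ = _ := by ring
  have htail : ∀ t, μ {ω | ¬ N t ω = 0} ≤ min 1 (M * (1 - (M : ℝ≥0∞)⁻¹) ^ t) := fun t => by
    refine le_min prob_le_one ?_
    calc μ {ω | ¬ N t ω = 0} = μ {ω | 1 ≤ (N t ω : ℝ≥0∞)} := by simp [Nat.one_le_iff_ne_zero]
      _ ≤ ∫⁻ ω, (N t ω : ℝ≥0∞) ∂μ := by
          have hNt : Measurable fun ω => (N t ω : ℝ≥0∞) := measurable_from_nat.comp (hN t)
          simpa only [one_mul] using mul_meas_ge_le_lintegral₀ hNt.aemeasurable 1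
      _ ≤ _ := hexp t
  calc _ ≤ ∑' t, μ {ω | ¬ N t ω = 0} :=
        lintegral_hitTime_le_tsum_measure fun t =>
          ((measurableSet_singleton 0).preimage (hN t)).compl
    _ ≤ _ := ENNReal.tsum_le_tsum htail
    _ ≤ _ := tsum_min_one_mul_geometric_le hM

end HittingTime

lemma two_mul_choose_two_le_sq (n : ℕ) : 2 * n.choose 2 ≤ n ^ 2 :=
  calc 2 * n.choose 2 = 2 * (n * (n - 1) / 2) := by rw [Nat.choose_two_right]
    _ ≤ n * (n - 1) := Nat.mul_div_le _ _
    _ ≤ n ^ 2 := by rw [sq]; exact Nat.mul_le_mul_left _ (Nat.sub_le _ _)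

lemma ceil_choose_two_mul_log_add_le {n : ℕ} (hn : 2 ≤ n) :
    (⌈(n.choose 2 : ℝ) * Real.log (n.choose 2)⌉₊ : ℝ≥0∞) + n.choose 2
      ≤ ENNReal.ofReal (3 * n ^ 2 * Real.log n) := by
  have hMn : 2 * (n.choose 2 : ℝ) ≤ n ^ 2 := by exact_mod_cast two_mul_choose_two_le_sq n
  set M := n.choose 2
  have hM1 : (1 : ℝ) ≤ M := by exact_mod_cast Nat.choose_pos hn
  have hn2 : (2 : ℝ) ≤ n := by exact_mod_cast hn
  have hlogn : 1 / 2 ≤ Real.log n := by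
    have := Real.log_two_gt_d9
    have := Real.log_le_log (by norm_num) hn2
    linarith
  have hlogM : Real.log M ≤ 2 * Real.log n :=
    calc Real.log M ≤ Real.log (n ^ 2) := Real.log_le_log (by linarith) (by linarith)
      _ = 2 * Real.log n := by rw [Real.log_pow]; push_cast; ring
  have hceil : (⌈(M : ℝ) * Real.log M⌉₊ : ℝ) ≤ M * Real.log M + 1 :=
    (Nat.ceil_lt_add_one (mul_nonneg (by linarith) (Real.log_nonneg hM1))).le
  rw [← ENNReal.ofReal_natCast, ← ENNReal.ofReal_natCast M,
    ← ENNReal.ofReal_add (by positivity) (by positivity)]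
  refine ENNReal.ofReal_le_ofReal ?_
  nlinarith [mul_le_mul hMn hlogM (Real.log_nonneg hM1) (by positivity),
    mul_le_mul_of_nonneg_left hlogn (by positivity : (0 : ℝ) ≤ n ^ 2)]

section History

variable {Ω β γ : Type*}

lemma exists_eq_comp_history {x : ℕ → Ω → β} {y : ℕ → Ω → γ} (f : γ → β → γ) (c : γ)
    (h0 : ∀ ω, y 0 ω = c) (hstep : ∀ t ω, y (t + 1) ω = f (y t ω) (x t ω)) (t : ℕ) :
    ∃ F : (Fin t → β) → γ, ∀ ω, y t ω = F fun s => x s ω := by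
  induction t with
  | zero => exact ⟨fun _ => c, h0⟩
  | succ t ih =>
    obtain ⟨F, hF⟩ := ih
    exact ⟨fun v => f (F (Fin.init v)) (v (Fin.last t)), fun ω => by rw [hstep, hF]; rfl⟩

variable [MeasurableSpace Ω] {μ : Measure Ω}

lemma ProbabilityTheory.iIndepFun.indepFun_history [MeasurableSpace β] {x : ℕ → Ω → β}
    (hx : iIndepFun x μ) (hm : ∀ t, Measurable (x t)) (t : ℕ) :
    IndepFun (x t) (fun ω (s : Fin t) => x s ω) μ :=
  (hx.indepFun_finset {t} (range t) (by simp) hm).comp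
    (φ := fun (v : ({t} : Finset ℕ) → β) => v ⟨t, mem_singleton_self t⟩)
    (ψ := fun (v : range t → β) (s : Fin t) => v ⟨s, mem_range.2 s.isLt⟩)
    (measurable_pi_apply _) (measurable_pi_lambda _ fun _ => measurable_pi_apply _)

lemma lintegral_card_eq_sum_measure [Fintype β] {S : Ω → Finset β}
    (hS : ∀ p, MeasurableSet {ω | p ∈ S ω}) :
    ∫⁻ ω, (#(S ω) : ℝ≥0∞) ∂μ = ∑ p, μ {ω | p ∈ S ω} := by
  have hcard : ∀ ω, (#(S ω) : ℝ≥0∞) = ∑ p, {ω | p ∈ S ω}.indicator 1 ω := fun ω => by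
    classical
    simp [Set.indicator_apply]
  simp_rw [hcard, lintegral_finsetSum _ fun p _ => measurable_one.indicator (hS p),
    lintegral_indicator_one (hS _)]

lemma ProbabilityTheory.IndepFun.measure_mem_eq_mul_lintegral_card [Fintype β] [MeasurableSpace β]
    [MeasurableSingletonClass β] [MeasurableSpace γ] [DiscreteMeasurableSpace γ]
    {X : Ω → β} {Y : Ω → γ} (hXY : IndepFun X Y μ) (hX : Measurable X) (hY : Measurable Y)
    (S : γ → Finset β) {c : ℝ≥0∞} (hc : ∀ y, ∀ p ∈ S y, μ (X ⁻¹' {p}) = c) :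
    μ {ω | X ω ∈ S (Y ω)} = c * ∫⁻ ω, (#(S (Y ω)) : ℝ≥0∞) ∂μ := by
  have hE : ∀ p, MeasurableSet (Y ⁻¹' {y | p ∈ S y}) := fun p => hY (.of_discrete)
  have hunion : {ω | X ω ∈ S (Y ω)} = ⋃ p, X ⁻¹' {p} ∩ Y ⁻¹' {y | p ∈ S y} := by
    ext ω; simp
  have hterm : ∀ p, μ (X ⁻¹' {p} ∩ Y ⁻¹' {y | p ∈ S y}) = c * μ (Y ⁻¹' {y | p ∈ S y}) := by
    intro p
    rw [hXY.measure_inter_preimage_eq_mul _ _ (measurableSet_singleton p) .of_discrete]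
    rcases (Y ⁻¹' {y | p ∈ S y}).eq_empty_or_nonempty with h | ⟨ω, hω⟩
    · simp [h]
    · rw [hc _ p hω]
  rw [hunion, measure_iUnion (fun p q hpq => Set.disjoint_left.2 fun ω h1 h2 => hpq
      (h1.1.symm.trans h2.1)) fun p => (hX (measurableSet_singleton p)).inter (hE p),
    tsum_fintype, lintegral_card_eq_sum_measure hE, mul_sum]
  exact sum_congr rfl fun p _ => hterm p

end History

section RandomInversionSort

variable {n : ℕ} {α Ω : Type*} [LinearOrder α] [MeasurableSpace Ω] {μ : Measure Ω}
  {pair : ℕ → Ω → Fin n × Fin n} {A : ℕ → Ω → Fin n → α}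

lemma measurable_card_inversions (A0 : Fin n → α) (hpm : ∀ t, Measurable (pair t))
    (hA0 : ∀ ω, A 0 ω = A0) (hAstep : ∀ t ω, A (t + 1) ω = sortStep (A t ω) (pair t ω))
    (t : ℕ) : Measurable fun ω => #(inversions (A t ω)) := by
  obtain ⟨F, hF⟩ := exists_eq_comp_history sortStep A0 hA0 hAstep t
  simp_rw [hF]
  exact (Measurable.of_discrete (f := fun v => #(inversions (F v)))).comp
    (measurable_pi_lambda _ fun s => hpm s)

lemma lintegral_card_inversions_succ_le (A0 : Fin n → α) (hpm : ∀ t, Measurable (pair t))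
    (hplt : ∀ t ω, (pair t ω).1 < (pair t ω).2) (hpind : iIndepFun pair μ)
    (hpunif : ∀ t : ℕ, ∀ i j : Fin n, i < j →
      μ {ω | pair t ω = (i, j)} = ((n.choose 2 : ℝ≥0∞))⁻¹)
    (hA0 : ∀ ω, A 0 ω = A0) (hAstep : ∀ t ω, A (t + 1) ω = sortStep (A t ω) (pair t ω))
    (t : ℕ) :
    ∫⁻ ω, (#(inversions (A (t + 1) ω)) : ℝ≥0∞) ∂μ
      ≤ (1 - (n.choose 2 : ℝ≥0∞)⁻¹) * ∫⁻ ω, (#(inversions (A t ω)) : ℝ≥0∞) ∂μ := by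
  have := hpind.isProbabilityMeasure
  set e := fun t => ∫⁻ ω, (#(inversions (A t ω)) : ℝ≥0∞) ∂μ
  obtain ⟨F, hF⟩ := exists_eq_comp_history sortStep A0 hA0 hAstep t
  have hhist : Measurable fun ω (s : Fin t) => pair s ω := measurable_pi_lambda _ fun s => hpm s
  set chosen := {ω | pair t ω ∈ inversions (A t ω)}
  have hchosen_meas : MeasurableSet chosen := by
    simp_rw [chosen, hF]
    exact (hpm t).prodMk hhist
      (.of_discrete : MeasurableSet {q : _ × (Fin t → _) | q.1 ∈ inversions (F q.2)})
  have hchosen : μ chosen = (n.choose 2 : ℝ≥0∞)⁻¹ * e t := by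
    simp_rw [chosen, e, hF]
    refine (hpind.indepFun_history hpm t).measure_mem_eq_mul_lintegral_card (hpm t) hhist
      (fun v => inversions (F v)) fun v p hp => ?_
    exact hpunif t p.1 p.2 (mem_inversions.1 hp).1
  have hdecrease : e (t + 1) + (n.choose 2 : ℝ≥0∞)⁻¹ * e t ≤ e t := by
    have hmeas : Measurable fun ω => (#(inversions (A (t + 1) ω)) : ℝ≥0∞) :=
      measurable_from_nat.comp (measurable_card_inversions A0 hpm hA0 hAstep (t + 1))
    simp only [e, ← hchosen, ← lintegral_indicator_one hchosen_meas, ← lintegral_add_left hmeas]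
    refine lintegral_mono fun ω => ?_
    have key := card_inversions_sortStep_add_le (A t ω) (hplt t ω)
    rw [← hAstep] at key
    simp only [Set.indicator_apply, chosen, Set.mem_ofPred_eq, Pi.one_apply]
    exact_mod_cast key
  have hfinite : e t ≠ ⊤ := ne_top_of_le_ne_top (by simp : ∫⁻ _, (n.choose 2 : ℝ≥0∞) ∂μ ≠ ⊤)
    (lintegral_mono fun ω => Nat.cast_le.2 (card_inversions_le (A t ω)))
  calc e (t + 1) ≤ e t - (n.choose 2 : ℝ≥0∞)⁻¹ * e t :=
        ENNReal.le_sub_of_add_le_right (ne_top_of_le_ne_top hfinite (le_of_add_le_right hdecrease))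
          hdecrease
    _ = (1 - (n.choose 2 : ℝ≥0∞)⁻¹) * e t := by rw [ENNReal.sub_mul fun _ _ => hfinite, one_mul]

end RandomInversionSort

/-- **Random inversion sort, upper bound.**
In each iteration an unordered pair of distinct positions (encoded as an ordered pair
`pair t` with increasing components, chosen uniformly and independently of everything else)
is chosen and the entries are swapped iff they form an inversion. `T` is the first
iteration after which the array has no inversion (i.e. is monotone).
Then `E[T] ≤ C n² ln n` for a universal constant `C > 0`. -/
theorem random_inversion_sort_upper_bound :
    ∃ C : ℝ, 0 < C ∧
      ∀ n : ℕ, 2 ≤ n →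
      ∀ (α : Type) (_ : LinearOrder α) (A0 : Fin n → α),
      ∀ (Ω : Type) (_ : MeasurableSpace Ω) (μ : Measure Ω), IsProbabilityMeasure μ →
      ∀ (pair : ℕ → Ω → Fin n × Fin n) (A : ℕ → Ω → Fin n → α),
      (∀ t, Measurable (pair t)) →
      (∀ t ω, (pair t ω).1 < (pair t ω).2) →
      iIndepFun pair μ →
      (∀ t : ℕ, ∀ i j : Fin n, i < j →
        μ {ω | pair t ω = (i, j)} = ((n.choose 2 : ENNReal))⁻¹) →
      (∀ ω, A 0 ω = A0) →
      (∀ t ω, A (t + 1) ω =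
        if A t ω (pair t ω).2 < A t ω (pair t ω).1
          then (A t ω) ∘ (Equiv.swap (pair t ω).1 (pair t ω).2)
          else A t ω) →
      ∫⁻ ω, hitTime (fun t ω => Monotone (A t ω)) ω ∂μ
        ≤ ENNReal.ofReal (C * n ^ 2 * Real.log n) := by
  refine ⟨3, by norm_num, fun n hn α _ A0 Ω _ μ _ pair A hpm hplt hpind hpunif hA0 hAstep => ?_⟩
  have hsorted : (fun t ω => Monotone (A t ω)) = fun t ω => #(inversions (A t ω)) = 0 := by
    simp only [card_eq_zero, inversions_eq_empty_iff]
  rw [hsorted]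
  calc _ ≤ (⌈(n.choose 2 : ℝ) * Real.log (n.choose 2)⌉₊ : ℝ≥0∞) + n.choose 2 :=
        lintegral_hitTime_le_of_drift (Nat.choose_pos hn)
          (measurable_card_inversions A0 hpm hA0 hAstep) (fun t ω => card_inversions_le _)
          (lintegral_card_inversions_succ_le A0 hpm hplt hpind hpunif hA0 hAstep)
    _ ≤ _ := ceil_choose_two_mul_log_add_le hn
end

section
/- Random inversion sort, lower bound: There is a constant c > 0 such that the following holds for every even n ≥ 2. Consider the initial array A of length n given by A = (2, 1, 4, 3, …, n, n−1), i.e., the sorted array with each consecutive pair of elements swapped. Run the random process that, in each iteration, chooses an unordered pair of two distinct positions of the array uniformly at random and swaps the entries at those positions if and only if they are out of order, and let T be the first iteration after which the array contains no inversion. Then E[T] ≥ c · n² · ln n. -/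
set_option autoImplicit false

open MeasureTheory ProbabilityTheory

/-
A block `{2k, 2k + 1}` of the array becomes sorted only when the pair `(2k, 2k + 1)` itself
is drawn: every other comparison meets two entries that are already in order. So the array at
time `t` is determined by the set of blocks drawn before `t`, and `T` is at least the time to
collect `n / 2` specific coupons out of `M = n.choose 2` equally likely ones. At a suitable time
`t ≥ (M - 1) log n` the expected number `x` of blocks never drawn lies in `[1/4, 1/2]`, and the
second-moment (Bonferroni) bound shows that some block is never drawn with probability at least
`x - x² ≥ 3/16`. Hence `E[T] ≥ 3/16 · (M - 1) log n ≥ 3/64 · n² log n`.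
-/

open Finset in
theorem sum_measureReal_le_measureReal_biUnion_add_sum_offDiag {Ω ι : Type*}
    [MeasurableSpace Ω] {μ : Measure Ω} [IsFiniteMeasure μ] [DecidableEq ι] {B : ι → Set Ω}
    (hB : ∀ k, MeasurableSet (B k)) (s : Finset ι) :
    ∑ k ∈ s, μ.real (B k) ≤
      μ.real (⋃ k ∈ s, B k) + ∑ p ∈ s.offDiag, μ.real (B p.1 ∩ B p.2) := by
  induction s using Finset.induction_on with
  | empty => simp
  | insert a s ha ih =>
    have hinter :
        μ.real (B a ∩ ⋃ k ∈ s, B k) ≤ ∑ p ∈ {a} ×ˢ s, μ.real (B p.1 ∩ B p.2) := by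
      rw [Set.inter_iUnion₂, singleton_product, sum_map]
      exact measureReal_biUnion_finset_le _ _
    have hdisj : Disjoint s.offDiag ({a} ×ˢ s) := by
      rw [disjoint_left]
      rintro p hp hp'
      simp only [mem_offDiag, mem_product, mem_singleton] at hp hp'
      exact ha (hp'.1 ▸ hp.1)
    have hoff : ∑ p ∈ s.offDiag, μ.real (B p.1 ∩ B p.2)
          + ∑ p ∈ {a} ×ˢ s, μ.real (B p.1 ∩ B p.2)
        ≤ ∑ p ∈ (insert a s).offDiag, μ.real (B p.1 ∩ B p.2) := by
      rw [← sum_union hdisj]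
      refine sum_le_sum_of_subset_of_nonneg ?_ fun _ _ _ => measureReal_nonneg
      rw [offDiag_insert ha]
      exact subset_union_left
    rw [sum_insert ha, set_biUnion_insert]
    linarith [measureReal_union_add_inter' (hB a) (measure_ne_top μ _)
      (measure_ne_top μ (⋃ k ∈ s, B k))]

theorem card_mul_sub_sq_le_measureReal_biUnion {Ω ι : Type*} [MeasurableSpace Ω]
    {μ : Measure Ω} [IsFiniteMeasure μ] {B : ι → Set Ω} (hB : ∀ k, MeasurableSet (B k))
    (s : Finset ι) {p : ℝ} (hp : ∀ k ∈ s, μ.real (B k) = p)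
    (hpp : ∀ k ∈ s, ∀ l ∈ s, k ≠ l → μ.real (B k ∩ B l) ≤ p ^ 2) :
    s.card * p - (s.card * p) ^ 2 ≤ μ.real (⋃ k ∈ s, B k) := by
  classical
  have hsum : ∑ k ∈ s, μ.real (B k) = s.card * p := by
    rw [Finset.sum_congr rfl hp, Finset.sum_const, nsmul_eq_mul]
  have hoff : ∑ q ∈ s.offDiag, μ.real (B q.1 ∩ B q.2) ≤ (s.card * p) ^ 2 := by
    calc ∑ q ∈ s.offDiag, μ.real (B q.1 ∩ B q.2) ≤ s.offDiag.card * p ^ 2 := by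
          rw [← nsmul_eq_mul]
          refine Finset.sum_le_card_nsmul _ _ _ fun q hq => ?_
          obtain ⟨hk, hl, hkl⟩ := Finset.mem_offDiag.1 hq
          exact hpp _ hk _ hl hkl
      _ ≤ s.card ^ 2 * p ^ 2 := by
          gcongr
          rw [Finset.offDiag_card]
          exact_mod_cast (Nat.sub_le _ _).trans_eq (sq _).symm
      _ = (s.card * p) ^ 2 := by ring
  linarith [sum_measureReal_le_measureReal_biUnion_add_sum_offDiag (μ := μ) hB s]

theorem ProbabilityTheory.iIndepFun.measureReal_biInter_preimage_compl {Ω β : Type*}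
    [MeasurableSpace Ω] {μ : Measure Ω} [IsProbabilityMeasure μ] [MeasurableSpace β]
    {X : ℕ → Ω → β} (hX : iIndepFun X μ) (hXm : ∀ s, Measurable (X s)) {D : Set β}
    (hD : MeasurableSet D) {r : ℝ} (hr : ∀ s, μ.real (X s ⁻¹' D) = r) (t : ℕ) :
    μ.real (⋂ s ∈ Finset.range t, X s ⁻¹' Dᶜ) = (1 - r) ^ t := by
  rw [measureReal_def, hX.measure_inter_preimage_eq_mul _ fun _ _ => hD.compl,
    ENNReal.toReal_prod, Finset.prod_congr rfl fun s _ => ?_, Finset.prod_const,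
    Finset.card_range]
  rw [← measureReal_def, Set.preimage_compl, probReal_compl_eq_one_sub (hXm s hD), hr]

theorem mul_measure_le_lintegral_of_forall_mem_le {Ω : Type*} [MeasurableSpace Ω]
    {μ : Measure Ω} {E : Set Ω} {f : Ω → ENNReal} {c : ENNReal} (hE : MeasurableSet E)
    (hf : ∀ ω ∈ E, c ≤ f ω) : c * μ E ≤ ∫⁻ ω, f ω ∂μ :=
  calc c * μ E = ∫⁻ _ in E, c ∂μ := (setLIntegral_const _ _).symm
    _ ≤ ∫⁻ ω in E, f ω ∂μ := setLIntegral_mono' hE hf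
    _ ≤ ∫⁻ ω, f ω ∂μ := setLIntegral_le_lintegral _ _

theorem le_hitTime {Ω : Type*} {P : ℕ → Ω → Prop} {ω : Ω} {t : ℕ}
    (h : ∀ s < t, ¬ P s ω) : (t : ENNReal) ≤ hitTime P ω := by
  refine le_sInf ?_
  rintro _ ⟨s, rfl, hs⟩
  by_contra! hlt
  exact h s (by exact_mod_cast hlt) hs

theorem exists_mul_pow_mem_Icc {a p : ℝ} (ha : 1 / 2 < a) (hp : 1 / 2 ≤ p) (hp1 : p < 1) :
    ∃ t : ℕ, a * p ^ t ∈ Set.Icc (1 / 4) (1 / 2) := by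
  classical
  have hex : ∃ t : ℕ, a * p ^ t ≤ 1 / 2 := by
    obtain ⟨t, ht⟩ := exists_pow_lt_of_lt_one (by positivity : 0 < 1 / (2 * a)) hp1
    rw [lt_div_iff₀ (by positivity)] at ht
    exact ⟨t, by linarith⟩
  obtain ⟨u, hu⟩ : ∃ u, Nat.find hex = u + 1 :=
    Nat.exists_eq_succ_of_ne_zero fun h0 => by
      have := Nat.find_spec hex
      rw [h0, pow_zero, mul_one] at this
      linarith
  have hprev : 1 / 2 < a * p ^ u := not_le.1 (Nat.find_min hex (by omega))
  refine ⟨u + 1, ?_, hu ▸ Nat.find_spec hex⟩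
  rw [pow_succ, ← mul_assoc]
  nlinarith

theorem mul_log_le_of_one_sub_inv_pow_le {M x : ℝ} {t : ℕ} (hM : 1 < M)
    (h : (1 - M⁻¹) ^ t ≤ x⁻¹) : (M - 1) * Real.log x ≤ t := by
  have hp : 0 < 1 - M⁻¹ := sub_pos.2 (inv_lt_one_of_one_lt₀ hM)
  have hM1 : 0 < M - 1 := by linarith
  have hlogp : -(M - 1)⁻¹ ≤ Real.log (1 - M⁻¹) := by
    refine le_of_eq_of_le ?_ (Real.one_sub_inv_le_log_of_pos hp)
    rw [show 1 - M⁻¹ = (M - 1) / M by field_simp, inv_div]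
    field_simp
    ring
  have hlog : t * Real.log (1 - M⁻¹) ≤ -Real.log x := by
    rw [← Real.log_pow, ← Real.log_inv]
    exact Real.log_le_log (pow_pos hp t) h
  have : Real.log x ≤ t * (M - 1)⁻¹ := by nlinarith [Nat.cast_nonneg (α := ℝ) t]
  rw [← div_eq_mul_inv, le_div_iff₀ hM1] at this
  linarith

def blockPair (n k : ℕ) : Set (Fin n × Fin n) :=
  {x | (x.1 : ℕ) = 2 * k ∧ (x.2 : ℕ) = 2 * k + 1}

theorem disjoint_blockPair {n k l : ℕ} (hkl : k ≠ l) :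
    Disjoint (blockPair n k) (blockPair n l) :=
  Set.disjoint_left.2 fun _ hk hl =>
    hkl (by simp only [blockPair, Set.mem_ofPred_eq] at hk hl; omega)

open Classical in
/-- The array `(2, 1, 4, 3, …)` once the blocks `{2k, 2k + 1}`, `k ∈ F`, are sorted. -/
noncomputable def blockArray (n : ℕ) (F : Set ℕ) (i : Fin n) : ℕ :=
  if (i : ℕ) / 2 ∈ F then i + 1 else if (i : ℕ) % 2 = 0 then i + 2 else i

section BlockArray

variable {n : ℕ}

theorem blockArray_empty :
    blockArray n ∅ = fun i : Fin n => if (i : ℕ) % 2 = 0 then (i : ℕ) + 2 else (i : ℕ) := by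
  funext i
  simp [blockArray]

theorem blockArray_comp_swap {F : Set ℕ} {i j : Fin n} (hj : (j : ℕ) = i + 1)
    (hi : (i : ℕ) % 2 = 0) (hF : (i : ℕ) / 2 ∉ F) :
    blockArray n F ∘ Equiv.swap i j = blockArray n (insert ((i : ℕ) / 2) F) := by
  have hji : (j : ℕ) / 2 = (i : ℕ) / 2 := by omega
  funext x
  rcases eq_or_ne x i with rfl | hxi
  · simp [blockArray, hji, hF, show (j : ℕ) % 2 = 1 by omega]
    omega
  rcases eq_or_ne x j with rfl | hxj
  · simp [blockArray, hji, hF, hi]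
    omega
  have hx : (x : ℕ) / 2 ≠ (i : ℕ) / 2 := by
    rw [Ne, Fin.ext_iff] at hxi hxj
    omega
  rw [Function.comp_apply, Equiv.swap_apply_of_ne_of_ne hxi hxj]
  by_cases hxF : (x : ℕ) / 2 ∈ F <;> simp [blockArray, hx, hxF]

theorem blockArray_step (F : Set ℕ) {i j : Fin n} (hij : i < j) :
    (if blockArray n F j < blockArray n F i then blockArray n F ∘ Equiv.swap i j
      else blockArray n F) = blockArray n (F ∪ {k | (i, j) ∈ blockPair n k}) := by
  have hij : (i : ℕ) < j := hij
  by_cases hblock : (j : ℕ) = i + 1 ∧ (i : ℕ) % 2 = 0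
  · have hk : {k | (i, j) ∈ blockPair n k} = {(i : ℕ) / 2} := by
      ext k
      simp only [blockPair, Set.mem_ofPred_eq, Set.mem_singleton_iff]
      omega
    rw [hk, Set.union_singleton]
    by_cases hF : (i : ℕ) / 2 ∈ F
    · rw [Set.insert_eq_of_mem hF, if_neg]
      simp only [blockArray, hF, if_true, show (j : ℕ) / 2 = i / 2 by omega]
      omega
    · rw [if_pos, blockArray_comp_swap hblock.1 hblock.2 hF]
      simp only [blockArray, hF, if_false, show (j : ℕ) / 2 = i / 2 by omega]
      split_ifs <;> omega
  · have hk : {k | (i, j) ∈ blockPair n k} = ∅ := by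
      ext k
      simp only [blockPair, Set.mem_ofPred_eq, Set.mem_empty_iff_false, iff_false]
      omega
    rw [hk, Set.union_empty, if_neg]
    unfold blockArray
    split_ifs <;> omega

theorem not_monotone_blockArray {F : Set ℕ} {k : ℕ} (hk : 2 * k + 1 < n) (hF : k ∉ F) :
    ¬ Monotone (blockArray n F) := by
  intro hmono
  have := @hmono ⟨2 * k, by omega⟩ ⟨2 * k + 1, hk⟩ (Fin.mk_le_mk.2 (by omega))
  simp only [blockArray, show (2 * k) / 2 = k by omega, show (2 * k + 1) / 2 = k by omega,
    hF, if_false] at this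
  split_ifs at this <;> omega

end BlockArray

section Dynamics

variable {n : ℕ} {Ω : Type*} (pair : ℕ → Ω → Fin n × Fin n)

def sortedBlocks (ω : Ω) (t : ℕ) : Set ℕ :=
  {k | ∃ s < t, pair s ω ∈ blockPair n k}

def neverChosen (k t : ℕ) : Set Ω :=
  ⋂ s ∈ Finset.range t, pair s ⁻¹' (blockPair n k)ᶜ

theorem sortedBlocks_zero (ω : Ω) : sortedBlocks pair ω 0 = ∅ := by
  simp [sortedBlocks]

theorem sortedBlocks_succ (ω : Ω) (t : ℕ) :
    sortedBlocks pair ω (t + 1) =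
      sortedBlocks pair ω t ∪ {k | pair t ω ∈ blockPair n k} := by
  ext k
  simp only [sortedBlocks, Set.mem_union, Set.mem_ofPred_eq, Nat.lt_succ_iff_lt_or_eq,
    or_and_right, exists_or, exists_eq_left]

theorem sortedBlocks_mono (ω : Ω) : Monotone (sortedBlocks pair ω) :=
  fun _ _ hst _ ⟨s, hs, hk⟩ => ⟨s, hs.trans_le hst, hk⟩

theorem mem_neverChosen_iff {k t : ℕ} {ω : Ω} :
    ω ∈ neverChosen pair k t ↔ k ∉ sortedBlocks pair ω t := by
  simp [neverChosen, sortedBlocks]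

theorem neverChosen_inter_neverChosen (k l t : ℕ) :
    neverChosen pair k t ∩ neverChosen pair l t =
      ⋂ s ∈ Finset.range t, pair s ⁻¹' (blockPair n k ∪ blockPair n l)ᶜ := by
  ext ω
  simp only [neverChosen, Set.mem_inter_iff, Set.mem_iInter, Set.compl_union,
    Set.preimage_inter, ← forall_and]

variable {pair} {A : ℕ → Ω → Fin n → ℕ}

theorem eq_blockArray_sortedBlocks (hlt : ∀ t ω, (pair t ω).1 < (pair t ω).2)
    (hA0 : ∀ ω, A 0 ω = fun i : Fin n => if (i : ℕ) % 2 = 0 then (i : ℕ) + 2 else (i : ℕ))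
    (hstep : ∀ t ω, A (t + 1) ω =
      if A t ω (pair t ω).2 < A t ω (pair t ω).1
        then (A t ω) ∘ (Equiv.swap (pair t ω).1 (pair t ω).2) else A t ω)
    (t : ℕ) (ω : Ω) : A t ω = blockArray n (sortedBlocks pair ω t) := by
  induction t with
  | zero => rw [hA0, sortedBlocks_zero, blockArray_empty]
  | succ t ih => rw [hstep, ih, blockArray_step _ (hlt t ω), sortedBlocks_succ]

theorem succ_le_hitTime_of_notMem_sortedBlocks
    (hA : ∀ t ω, A t ω = blockArray n (sortedBlocks pair ω t))
    {ω : Ω} {k t : ℕ} (hk : 2 * k + 1 < n) (hkt : k ∉ sortedBlocks pair ω t) :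
    ((t + 1 : ℕ) : ENNReal) ≤ hitTime (fun t ω => Monotone (A t ω)) ω := by
  refine le_hitTime fun s hs => ?_
  rw [hA]
  exact not_monotone_blockArray hk fun hks => hkt (sortedBlocks_mono pair ω (by omega) hks)

theorem le_hitTime_of_mem_biUnion_neverChosen
    (hA : ∀ t ω, A t ω = blockArray n (sortedBlocks pair ω t)) {t : ℕ} {ω : Ω}
    (hω : ω ∈ ⋃ k ∈ Finset.range (n / 2), neverChosen pair k t) :
    (t : ENNReal) ≤ hitTime (fun t ω => Monotone (A t ω)) ω := by
  simp only [Set.mem_iUnion, Finset.mem_range, exists_prop] at hω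
  obtain ⟨k, hk, hωk⟩ := hω
  exact le_trans (by gcongr; omega)
    (succ_le_hitTime_of_notMem_sortedBlocks hA (by omega) ((mem_neverChosen_iff pair).1 hωk))

variable [MeasurableSpace Ω] {μ : Measure Ω}

theorem measurableSet_neverChosen (hmeas : ∀ t, Measurable (pair t)) (k t : ℕ) :
    MeasurableSet (neverChosen pair k t) :=
  .biInter (Finset.countable_toSet _) fun s _ => hmeas s (Set.toFinite _).measurableSet

theorem measureReal_preimage_blockPair
    (hunif : ∀ t : ℕ, ∀ i j : Fin n, i < j →
      μ {ω | pair t ω = (i, j)} = ((n.choose 2 : ENNReal))⁻¹)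
    (s : ℕ) {k : ℕ} (hk : 2 * k + 1 < n) :
    μ.real (pair s ⁻¹' blockPair n k) = (n.choose 2 : ℝ)⁻¹ := by
  have hset : pair s ⁻¹' blockPair n k =
      {ω | pair s ω = (⟨2 * k, by omega⟩, ⟨2 * k + 1, hk⟩)} := by
    ext ω
    simp [blockPair, Prod.ext_iff, Fin.ext_iff]
  rw [hset, measureReal_def, hunif s _ _ (Fin.mk_lt_mk.2 (by omega)), ENNReal.toReal_inv,
    ENNReal.toReal_natCast]

theorem three_div_sixteen_le_measureReal_biUnion_neverChosen [IsProbabilityMeasure μ]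
    (hmeas : ∀ t, Measurable (pair t)) (hindep : iIndepFun pair μ)
    (hunif : ∀ t : ℕ, ∀ i j : Fin n, i < j →
      μ {ω | pair t ω = (i, j)} = ((n.choose 2 : ENNReal))⁻¹)
    (hn : 4 ≤ n) {t : ℕ}
    (ht : (n / 2 : ℕ) * (1 - (n.choose 2 : ℝ)⁻¹) ^ t ∈ Set.Icc (1 / 4) (1 / 2)) :
    3 / 16 ≤ μ.real (⋃ k ∈ Finset.range (n / 2), neverChosen pair k t) := by
  set M : ℝ := ((n.choose 2 : ℕ) : ℝ) with hMdef
  have hM : 2 ≤ M := by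
    have : (4 : ℝ) ≤ n := by exact_mod_cast hn
    rw [hMdef, Nat.cast_choose_two]
    nlinarith
  have hD (D : Set (Fin n × Fin n)) : MeasurableSet D := D.toFinite.measurableSet
  have hblock {k : ℕ} (hk : k ∈ Finset.range (n / 2)) : 2 * k + 1 < n := by
    rw [Finset.mem_range] at hk
    omega
  have hp (k) (hk : k ∈ Finset.range (n / 2)) :
      μ.real (neverChosen pair k t) = (1 - M⁻¹) ^ t :=
    hindep.measureReal_biInter_preimage_compl hmeas (hD _)
      (fun s => measureReal_preimage_blockPair hunif s (hblock hk)) t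
  have hpp (k) (hk : k ∈ Finset.range (n / 2)) (l) (hl : l ∈ Finset.range (n / 2))
      (hkl : k ≠ l) :
      μ.real (neverChosen pair k t ∩ neverChosen pair l t) ≤ ((1 - M⁻¹) ^ t) ^ 2 := by
    have hunion (s : ℕ) :
        μ.real (pair s ⁻¹' (blockPair n k ∪ blockPair n l)) = 2 * M⁻¹ := by
      rw [Set.preimage_union, measureReal_union ((disjoint_blockPair hkl).preimage _)
        (hmeas s (hD _)), measureReal_preimage_blockPair hunif s (hblock hk),
        measureReal_preimage_blockPair hunif s (hblock hl)]
      ring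
    rw [neverChosen_inter_neverChosen,
      hindep.measureReal_biInter_preimage_compl hmeas (hD _) hunion t, ← pow_mul,
      mul_comm t 2, pow_mul]
    have : M⁻¹ ≤ 1 / 2 := by
      rw [one_div]
      exact inv_anti₀ (by norm_num) hM
    exact pow_le_pow_left₀ (by linarith) (by nlinarith [sq_nonneg M⁻¹]) t
  have := card_mul_sub_sq_le_measureReal_biUnion (measurableSet_neverChosen hmeas · t) _ hp hpp
  rw [Finset.card_range] at this
  nlinarith [ht.1, ht.2]

end Dynamics

-- `(n / 2) * (1 - M⁻¹) ^ t`, with `M = n.choose 2`, is the expected number of blocks never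
-- drawn before time `t`.
theorem exists_mul_pow_mem_Icc_of_choose_two {n : ℕ} (hn : 4 ≤ n) (heven : Even n) :
    ∃ t : ℕ, (n / 2 : ℕ) * (1 - (n.choose 2 : ℝ)⁻¹) ^ t ∈ Set.Icc (1 / 4) (1 / 2) ∧
      (n : ℝ) ^ 2 / 4 * Real.log n ≤ t := by
  set M : ℝ := ((n.choose 2 : ℕ) : ℝ) with hMdef
  have hn' : (4 : ℝ) ≤ n := by exact_mod_cast hn
  have hM : (n : ℝ) ^ 2 / 4 ≤ M - 1 := by
    rw [hMdef, Nat.cast_choose_two]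
    nlinarith
  have hM2 : 2 ≤ M := by nlinarith
  have hhalf : ((n / 2 : ℕ) : ℝ) = n / 2 := by
    rw [Nat.cast_div (even_iff_two_dvd.1 heven) two_ne_zero]
    norm_num
  obtain ⟨t, ht⟩ := exists_mul_pow_mem_Icc (a := (n / 2 : ℕ)) (p := 1 - M⁻¹)
    (by rw [hhalf]; linarith) (by linarith [inv_anti₀ (by norm_num : (0 : ℝ) < 2) hM2])
    (sub_lt_self _ (inv_pos.2 (by linarith)))
  refine ⟨t, ht, le_trans ?_ (mul_log_le_of_one_sub_inv_pow_le (M := M) (x := n)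
    (by linarith) ?_)⟩
  · exact mul_le_mul_of_nonneg_right hM (Real.log_nonneg (by linarith))
  · have := ht.2
    rw [hhalf] at this
    rw [← one_div (n : ℝ), le_div_iff₀ (by positivity)]
    linarith

/-- **Random inversion sort, lower bound.**
For even `n`, start from the array `(2, 1, 4, 3, …, n, n−1)`, i.e. position `i`
(0-indexed) holds `i + 2` if `i` is even and `i` if `i` is odd. In each iteration an
unordered pair of distinct positions (encoded as an ordered pair `pair t` with increasing
components, chosen uniformly and independently of everything else) is chosen and the
entries are swapped iff they form an inversion. `T` is the first iteration after which
the array has no inversion. Then `E[T] ≥ c n² ln n` for a universal constant `c > 0`. -/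
theorem random_inversion_sort_lower_bound :
    ∃ c : ℝ, 0 < c ∧
      ∀ n : ℕ, 2 ≤ n → Even n →
      ∀ (Ω : Type) (_ : MeasurableSpace Ω) (μ : Measure Ω), IsProbabilityMeasure μ →
      ∀ (pair : ℕ → Ω → Fin n × Fin n) (A : ℕ → Ω → Fin n → ℕ),
      (∀ t, Measurable (pair t)) →
      (∀ t ω, (pair t ω).1 < (pair t ω).2) →
      iIndepFun pair μ →
      (∀ t : ℕ, ∀ i j : Fin n, i < j →
        μ {ω | pair t ω = (i, j)} = ((n.choose 2 : ENNReal))⁻¹) →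
      (∀ ω, A 0 ω = fun i : Fin n => if (i : ℕ) % 2 = 0 then (i : ℕ) + 2 else (i : ℕ)) →
      (∀ t ω, A (t + 1) ω =
        if A t ω (pair t ω).2 < A t ω (pair t ω).1
          then (A t ω) ∘ (Equiv.swap (pair t ω).1 (pair t ω).2)
          else A t ω) →
      ENNReal.ofReal (c * n ^ 2 * Real.log n)
        ≤ ∫⁻ ω, hitTime (fun t ω => Monotone (A t ω)) ω ∂μ := by
  refine ⟨3 / 64, by norm_num,
    fun n hn heven Ω _ μ _ pair A hmeas hlt hindep hunif hA0 hstep => ?_⟩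
  have hA := eq_blockArray_sortedBlocks hlt hA0 hstep
  obtain rfl | hn4 : n = 2 ∨ 4 ≤ n := by obtain ⟨m, rfl⟩ := heven; omega
  · calc ENNReal.ofReal (3 / 64 * (2 : ℕ) ^ 2 * Real.log (2 : ℕ)) ≤ 1 * μ Set.univ := by
          rw [measure_univ, one_mul, ENNReal.ofReal_le_one]
          norm_num
          linarith [Real.log_two_lt_d9]
      _ ≤ _ := mul_measure_le_lintegral_of_forall_mem_le .univ fun ω _ => by
          simpa using succ_le_hitTime_of_notMem_sortedBlocks hA (ω := ω) (k := 0) (t := 0)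
            (by norm_num) (by simp [sortedBlocks_zero])
  obtain ⟨t, ht, hlog⟩ := exists_mul_pow_mem_Icc_of_choose_two hn4 heven
  set E := ⋃ k ∈ Finset.range (n / 2), neverChosen pair k t
  have hE : 3 / 16 ≤ μ.real E :=
    three_div_sixteen_le_measureReal_biUnion_neverChosen hmeas hindep hunif hn4 ht
  have hlogn : 0 ≤ Real.log n := Real.log_nonneg (by exact_mod_cast (by omega : 1 ≤ n))
  calc ENNReal.ofReal (3 / 64 * n ^ 2 * Real.log n) ≤ ENNReal.ofReal (t * μ.real E) :=
        ENNReal.ofReal_le_ofReal (by nlinarith)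
    _ = t * μ E := by
        rw [ENNReal.ofReal_mul (Nat.cast_nonneg _), ENNReal.ofReal_natCast,
          ofReal_measureReal (measure_ne_top μ E)]
    _ ≤ _ := mul_measure_le_lintegral_of_forall_mem_le
        (.biUnion (Finset.countable_toSet _) fun k _ => measurableSet_neverChosen hmeas k t)
        fun _ hω => le_hitTime_of_mem_biUnion_neverChosen hA hω
end

section
/- Absorption time of the neutral Moran process (r = 1): Let n ≥ 2 and let (Y_t)_{t∈ℕ} be the Markov chain on {0, 1, …, n} started at Y_0 = n − 1 in which, for each interior state k ∈ {1, …, n−1}, setting p(k) = (k/n)·((n − k)/n), the chain moves from k to k + 1 with probability p(k), from k to k − 1 with probability p(k), and stays at k otherwise, while the states 0 and n are absorbing. Let T = inf{t ∈ ℕ : Y_t ∈ {0, n}}. Then E[T] ≤ n²/2. -/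
set_option autoImplicit false

open MeasureTheory ProbabilityTheory

/-- The one-step transition probability of the neutral Moran process (`r = 1`) on `n`
individuals at `k` non-mutants: `p(k) = (k/n)·((n − k)/n)`. -/
noncomputable def neutralMoranP (n k : ℕ) : ℝ :=
  ((k : ℝ) / (n : ℝ)) * (((n : ℝ) - (k : ℝ)) / (n : ℝ))

/-- `Y` is (a copy of) the neutral Moran chain on `n` individuals: conditional on any
positive-probability history, from an interior state `k` the chain moves up by one with
probability `p(k) = k(n−k)/n²`, down by one with probability `p(k)`, and stays otherwise;
the states `0` and `n` are absorbing. -/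
def IsNeutralMoranChain {Ω : Type} [MeasurableSpace Ω] (μ : Measure Ω)
    (n : ℕ) (Y : ℕ → Ω → ℕ) : Prop :=
  (∀ t, Measurable (Y t)) ∧ (∀ t ω, Y t ω ≤ n) ∧
  ∀ t : ℕ, ∀ h : ℕ → ℕ, μ {ω | ∀ i ≤ t, Y i ω = h i} ≠ 0 →
    ((0 < h t → h t < n →
      (ProbabilityTheory.cond μ {ω | ∀ i ≤ t, Y i ω = h i}) {ω | Y (t + 1) ω = h t + 1}
          = ENNReal.ofReal (neutralMoranP n (h t)) ∧
      (ProbabilityTheory.cond μ {ω | ∀ i ≤ t, Y i ω = h i}) {ω | Y (t + 1) ω = h t - 1}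
          = ENNReal.ofReal (neutralMoranP n (h t)) ∧
      (ProbabilityTheory.cond μ {ω | ∀ i ≤ t, Y i ω = h i}) {ω | Y (t + 1) ω = h t}
          = ENNReal.ofReal (1 - 2 * neutralMoranP n (h t))) ∧
    ((h t = 0 ∨ h t = n) →
      (ProbabilityTheory.cond μ {ω | ∀ i ≤ t, Y i ω = h i}) {ω | Y (t + 1) ω = h t} = 1))

/-!
The potential `φ(k) = k(n − k)` satisfies `φ(k + 1) + φ(k − 1) = 2φ(k) − 2`, so one step of the
chain from `k` lowers its mean by `2p(k) = 2φ(k)/n²`: conditionally on any history,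
`E[φ(Y_{t+1})] = (1 − 2/n²) φ(Y_t)`, hence `E[φ(Y_t)] = (1 − 2/n²)^t (n − 1)`.
Normalised by `n − 1`, the potential is `1` at the start and at least `1` at every interior state,
so the absorption time is at most `∑_t φ(Y_t)/(n − 1)`, whose expectation is
`∑_t (1 − 2/n²)^t = n²/2`.
-/

open scoped ENNReal

theorem hitTime_le_tsum {Ω : Type*} {P : ℕ → Ω → Prop} {ω : Ω} {f : ℕ → ℝ≥0∞}
    (h : ∀ t, ¬ P t ω → 1 ≤ f t) : hitTime P ω ≤ ∑' t, f t := by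
  classical
  by_cases hex : ∃ m, P m ω
  · calc hitTime P ω ≤ Nat.find hex := sInf_le ⟨_, rfl, Nat.find_spec hex⟩
      _ = ∑ _t ∈ Finset.range (Nat.find hex), 1 := by simp
      _ ≤ ∑ t ∈ Finset.range (Nat.find hex), f t :=
        Finset.sum_le_sum fun t ht => h t (Nat.find_min hex (Finset.mem_range.mp ht))
      _ ≤ ∑' t, f t := ENNReal.sum_le_tsum _
  · push Not at hex
    calc hitTime P ω ≤ ∞ := le_top
      _ = ∑' _t : ℕ, 1 := (ENNReal.tsum_const_eq_top_of_ne_zero one_ne_zero).symm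
      _ ≤ ∑' t, f t := ENNReal.tsum_le_tsum fun t => h t (hex t)

theorem lintegral_eq_tsum_setLIntegral_fiber {Ω β : Type*} [MeasurableSpace Ω] [MeasurableSpace β]
    [Countable β] [MeasurableSingletonClass β] {μ : Measure Ω} {H : Ω → β} (hH : Measurable H)
    (g : Ω → ℝ≥0∞) : ∫⁻ ω, g ω ∂μ = ∑' b, ∫⁻ ω in H ⁻¹' {b}, g ω ∂μ := by
  rw [← lintegral_iUnion (fun b => hH (measurableSet_singleton b)) (pairwise_disjoint_fiber H),
    ← Set.preimage_iUnion, Set.iUnion_of_singleton, Set.preimage_univ, setLIntegral_univ]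

theorem lintegral_comp_eq_sum_of_sum_measure_preimage_eq_one {Ω α : Type*} [MeasurableSpace Ω]
    [MeasurableSpace α] [Countable α] [MeasurableSingletonClass α] {ν : Measure Ω}
    [IsProbabilityMeasure ν] {X : Ω → α} (hX : Measurable X) {s : Finset α}
    (hs : ∑ a ∈ s, ν (X ⁻¹' {a}) = 1) (f : α → ℝ≥0∞) :
    ∫⁻ ω, f (X ω) ∂ν = ∑ a ∈ s, f a * ν (X ⁻¹' {a}) := by
  have : IsProbabilityMeasure (ν.map X) := Measure.isProbabilityMeasure_map hX.aemeasurable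
  have hae : ∀ᵐ a ∂ν.map X, a ∈ (s : Set α) := by
    rw [ae_mem_iff_measure_eq s.measurableSet.nullMeasurableSet, Measure.map_apply hX
      s.measurableSet, ← sum_measure_preimage_singleton s fun a _ => hX (measurableSet_singleton a),
      hs, measure_univ]
  rw [← lintegral_map (measurable_of_countable f) hX, ← Measure.restrict_eq_self_of_ae_mem hae,
    lintegral_finset]
  simp only [Measure.map_apply hX (measurableSet_singleton _)]

theorem restrict_eq_measure_smul_cond {Ω : Type*} [MeasurableSpace Ω] {μ : Measure Ω}
    [IsFiniteMeasure μ] {s : Set Ω} (hs : μ s ≠ 0) : μ.restrict s = μ s • μ[|s] := by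
  rw [ProbabilityTheory.cond, smul_smul, ENNReal.mul_inv_cancel hs (measure_ne_top μ s), one_smul]

noncomputable def moranPotential (n k : ℕ) : ℝ≥0∞ :=
  ENNReal.ofReal (k * (n - k) / (n - 1))

noncomputable def moranContraction (n : ℕ) : ℝ≥0∞ :=
  ENNReal.ofReal (1 - 2 / n ^ 2)

section Potential

variable {n k : ℕ}

@[simp]
theorem moranPotential_zero : moranPotential n 0 = 0 := by
  simp [moranPotential]

@[simp]
theorem moranPotential_self : moranPotential n n = 0 := by
  simp [moranPotential]

theorem moranPotential_sub_one (hn : 2 ≤ n) : moranPotential n (n - 1) = 1 := by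
  have hn' : (n : ℝ) - 1 ≠ 0 := by
    have : (2 : ℝ) ≤ n := by exact_mod_cast hn
    linarith
  rw [moranPotential, Nat.cast_sub (by omega), Nat.cast_one, sub_sub_cancel, mul_one,
    div_self hn', ENNReal.ofReal_one]

theorem one_le_moranPotential (hk₀ : 0 < k) (hkn : k < n) : 1 ≤ moranPotential n k := by
  have hk : (1 : ℝ) ≤ k := by exact_mod_cast hk₀
  have hn : (k : ℝ) + 1 ≤ n := by exact_mod_cast hkn
  rw [moranPotential, ← ENNReal.ofReal_one]
  refine ENNReal.ofReal_le_ofReal ((one_le_div (by linarith)).mpr ?_)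
  nlinarith

theorem neutralMoranP_nonneg (hkn : k ≤ n) : 0 ≤ neutralMoranP n k := by
  have : (k : ℝ) ≤ n := by exact_mod_cast hkn
  unfold neutralMoranP
  exact mul_nonneg (by positivity) (div_nonneg (by linarith) (by positivity))

theorem two_mul_neutralMoranP_le_one : 2 * neutralMoranP n k ≤ 1 := by
  rcases Nat.eq_zero_or_pos n with rfl | hn
  · simp [neutralMoranP]
  have hn : (0 : ℝ) < n := by exact_mod_cast hn
  rw [neutralMoranP, div_mul_div_comm, ← mul_div_assoc, div_le_one (by positivity)]
  nlinarith [sq_nonneg ((n : ℝ) - 2 * k)]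

theorem moranPotential_drift (hk₀ : 0 < k) (hkn : k < n) :
    moranPotential n (k + 1) * ENNReal.ofReal (neutralMoranP n k) +
      (moranPotential n (k - 1) * ENNReal.ofReal (neutralMoranP n k) +
        moranPotential n k * ENNReal.ofReal (1 - 2 * neutralMoranP n k)) =
      moranContraction n * moranPotential n k := by
  have hk : (1 : ℝ) ≤ k := by exact_mod_cast hk₀
  have hn : (k : ℝ) + 1 ≤ n := by exact_mod_cast hkn
  have hp := neutralMoranP_nonneg hkn.le
  have hq : 0 ≤ 1 - 2 * neutralMoranP n k := by
    linarith [two_mul_neutralMoranP_le_one (n := n) (k := k)]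
  have hc : 0 ≤ 1 - 2 / (n : ℝ) ^ 2 := by
    rw [sub_nonneg, div_le_one (by nlinarith)]
    nlinarith
  have hφsucc : 0 ≤ ((k : ℝ) + 1) * (n - (k + 1)) / (n - 1) :=
    div_nonneg (by nlinarith) (by linarith)
  have hφpred : 0 ≤ ((k : ℝ) - 1) * (n - (k - 1)) / (n - 1) :=
    div_nonneg (by nlinarith) (by linarith)
  have hφ : 0 ≤ (k : ℝ) * (n - k) / (n - 1) := div_nonneg (by nlinarith) (by linarith)
  simp only [moranPotential, moranContraction, Nat.cast_add, Nat.cast_one, Nat.cast_sub hk₀]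
  rw [← ENNReal.ofReal_mul hφsucc, ← ENNReal.ofReal_mul hφpred, ← ENNReal.ofReal_mul hφ,
    ← ENNReal.ofReal_add (mul_nonneg hφpred hp) (mul_nonneg hφ hq),
    ← ENNReal.ofReal_add (mul_nonneg hφsucc hp)
      (add_nonneg (mul_nonneg hφpred hp) (mul_nonneg hφ hq)),
    ← ENNReal.ofReal_mul hc]
  congr 1
  have : (n : ℝ) - 1 ≠ 0 := by linarith
  have : (n : ℝ) ≠ 0 := by linarith
  unfold neutralMoranP
  field_simp
  ring

theorem tsum_moranContraction_pow (hn : 2 ≤ n) :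
    ∑' t, moranContraction n ^ t = ENNReal.ofReal ((n : ℝ) ^ 2 / 2) := by
  have hn : (2 : ℝ) ≤ n := by exact_mod_cast hn
  have hpos : 0 < 2 / (n : ℝ) ^ 2 := by positivity
  have hle : 2 / (n : ℝ) ^ 2 ≤ 1 := by
    rw [div_le_one (by positivity)]
    nlinarith
  rw [ENNReal.tsum_geometric, moranContraction, ← ENNReal.ofReal_one,
    ← ENNReal.ofReal_sub _ (by linarith), sub_sub_cancel, ← ENNReal.ofReal_inv_of_pos hpos,
    inv_div]

end Potential

theorem lintegral_moranPotential_of_law {Ω : Type*} [MeasurableSpace Ω] {ν : Measure Ω}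
    [IsProbabilityMeasure ν] {X : Ω → ℕ} (hX : Measurable X) {n k : ℕ} (hkn : k ≤ n)
    (hinterior : 0 < k → k < n →
      ν (X ⁻¹' {k + 1}) = ENNReal.ofReal (neutralMoranP n k) ∧
      ν (X ⁻¹' {k - 1}) = ENNReal.ofReal (neutralMoranP n k) ∧
      ν (X ⁻¹' {k}) = ENNReal.ofReal (1 - 2 * neutralMoranP n k))
    (habsorbing : k = 0 ∨ k = n → ν (X ⁻¹' {k}) = 1) :
    ∫⁻ ω, moranPotential n (X ω) ∂ν = moranContraction n * moranPotential n k := by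
  by_cases hk : k = 0 ∨ k = n
  · have hφ : moranPotential n k = 0 := by rcases hk with rfl | rfl <;> simp
    rw [lintegral_comp_eq_sum_of_sum_measure_preimage_eq_one hX (s := {k})
      (by simpa using habsorbing hk), Finset.sum_singleton, hφ, zero_mul, mul_zero]
  push Not at hk
  have hk₀ : 0 < k := Nat.pos_of_ne_zero hk.1
  have hkn : k < n := lt_of_le_of_ne hkn hk.2
  obtain ⟨hup, hdown, hstay⟩ := hinterior hk₀ hkn
  have hsucc : k + 1 ∉ ({k - 1, k} : Finset ℕ) := by
    simp only [Finset.mem_insert, Finset.mem_singleton]; omega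
  have hpred : k - 1 ∉ ({k} : Finset ℕ) := by
    simp only [Finset.mem_singleton]; omega
  have htotal : ∑ j ∈ {k + 1, k - 1, k}, ν (X ⁻¹' {j}) = 1 := by
    have hp := neutralMoranP_nonneg hkn.le
    have hq : 0 ≤ 1 - 2 * neutralMoranP n k := by
      linarith [two_mul_neutralMoranP_le_one (n := n) (k := k)]
    rw [Finset.sum_insert hsucc, Finset.sum_insert hpred, Finset.sum_singleton, hup, hdown, hstay,
      ← ENNReal.ofReal_add hp hq, ← ENNReal.ofReal_add hp (add_nonneg hp hq), ← ENNReal.ofReal_one]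
    congr 1
    ring
  rw [lintegral_comp_eq_sum_of_sum_measure_preimage_eq_one hX htotal, Finset.sum_insert hsucc,
    Finset.sum_insert hpred, Finset.sum_singleton, hup, hdown, hstay, moranPotential_drift hk₀ hkn]

section MoranChain

variable {Ω : Type} [MeasurableSpace Ω] {μ : Measure Ω} {n : ℕ} {Y : ℕ → Ω → ℕ}

theorem measurableSet_history (hY : ∀ t, Measurable (Y t)) (t : ℕ) (h : ℕ → ℕ) :
    MeasurableSet {ω | ∀ i ≤ t, Y i ω = h i} := by
  simp only [Set.ofPred_forall]
  exact .iInter fun i => .iInter fun _ => hY i (measurableSet_singleton _)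

theorem setLIntegral_history_moranPotential_succ [IsFiniteMeasure μ]
    (hY : IsNeutralMoranChain μ n Y) (t : ℕ) (h : ℕ → ℕ) :
    ∫⁻ ω in {ω | ∀ i ≤ t, Y i ω = h i}, moranPotential n (Y (t + 1) ω) ∂μ =
      moranContraction n * ∫⁻ ω in {ω | ∀ i ≤ t, Y i ω = h i}, moranPotential n (Y t ω) ∂μ := by
  obtain ⟨hmeas, hle, hstep⟩ := hY
  set A := {ω | ∀ i ≤ t, Y i ω = h i}
  have hA : MeasurableSet A := measurableSet_history hmeas t h
  have hnow : ∫⁻ ω in A, moranPotential n (Y t ω) ∂μ = moranPotential n (h t) * μ A := by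
    rw [setLIntegral_congr_fun hA fun ω hω => by rw [hω t le_rfl], setLIntegral_const]
  rw [hnow]
  by_cases hμA : μ A = 0
  · rw [Measure.restrict_eq_zero.mpr hμA, lintegral_zero_measure, hμA, mul_zero, mul_zero]
  obtain ⟨ω₀, hω₀⟩ := nonempty_of_measure_ne_zero hμA
  have : IsProbabilityMeasure μ[|A] := cond_isProbabilityMeasure hμA
  obtain ⟨hinterior, habsorbing⟩ := hstep t h hμA
  rw [restrict_eq_measure_smul_cond hμA, lintegral_smul_measure,
    lintegral_moranPotential_of_law (hmeas (t + 1)) ((hω₀ t le_rfl) ▸ hle t ω₀) hinterior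
      habsorbing]
  ring

theorem lintegral_moranPotential_succ [IsFiniteMeasure μ] (hY : IsNeutralMoranChain μ n Y)
    (t : ℕ) :
    ∫⁻ ω, moranPotential n (Y (t + 1) ω) ∂μ =
      moranContraction n * ∫⁻ ω, moranPotential n (Y t ω) ∂μ := by
  have hH : Measurable fun ω (i : Fin (t + 1)) => Y i ω := measurable_pi_lambda _ fun i => hY.1 i
  rw [lintegral_eq_tsum_setLIntegral_fiber hH, lintegral_eq_tsum_setLIntegral_fiber hH,
    ← ENNReal.tsum_mul_left]
  refine tsum_congr fun v => ?_
  by_cases hv : ∃ ω₀, (fun i : Fin (t + 1) => Y i ω₀) = v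
  · obtain ⟨ω₀, rfl⟩ := hv
    have hfiber : (fun ω (i : Fin (t + 1)) => Y i ω) ⁻¹' {fun i : Fin (t + 1) => Y i ω₀} =
        {ω | ∀ i ≤ t, Y i ω = Y i ω₀} := by
      ext ω
      simp [funext_iff, Fin.forall_iff]
    rw [hfiber, setLIntegral_history_moranPotential_succ hY]
  · rw [Set.preimage_singleton_eq_empty.mpr hv]
    simp

theorem lintegral_moranPotential [IsProbabilityMeasure μ] (hn : 2 ≤ n)
    (hY : IsNeutralMoranChain μ n Y) (hY0 : ∀ ω, Y 0 ω = n - 1) (t : ℕ) :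
    ∫⁻ ω, moranPotential n (Y t ω) ∂μ = moranContraction n ^ t := by
  induction t with
  | zero => simp [hY0, moranPotential_sub_one hn]
  | succ t ih => rw [lintegral_moranPotential_succ hY, ih, pow_succ']

end MoranChain

/-- **Absorption time of the neutral Moran process (`r = 1`).**
Started at `n − 1`, the expected first-hitting time of `{0, n}` is at most `n²/2`. -/
theorem neutral_moran_absorption_time
    (n : ℕ) (hn : 2 ≤ n)
    {Ω : Type} [MeasurableSpace Ω] (μ : Measure Ω) [IsProbabilityMeasure μ]
    (Y : ℕ → Ω → ℕ) (hY : IsNeutralMoranChain μ n Y) (hY0 : ∀ ω, Y 0 ω = n - 1) :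
    ∫⁻ ω, hitTime (fun t ω => Y t ω = 0 ∨ Y t ω = n) ω ∂μ
      ≤ ENNReal.ofReal ((n : ℝ) ^ 2 / 2) := by
  have hinterior : ∀ t ω, ¬(Y t ω = 0 ∨ Y t ω = n) → 1 ≤ moranPotential n (Y t ω) := by
    intro t ω h
    push Not at h
    exact one_le_moranPotential (Nat.pos_of_ne_zero h.1) (lt_of_le_of_ne (hY.2.1 t ω) h.2)
  calc ∫⁻ ω, hitTime (fun t ω => Y t ω = 0 ∨ Y t ω = n) ω ∂μ
      ≤ ∫⁻ ω, ∑' t, moranPotential n (Y t ω) ∂μ :=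
        lintegral_mono fun ω => hitTime_le_tsum fun t => hinterior t ω
    _ = ∑' t, ∫⁻ ω, moranPotential n (Y t ω) ∂μ :=
        lintegral_tsum fun t =>
          ((measurable_of_countable (moranPotential n)).comp (hY.1 t)).aemeasurable
    _ = ∑' t, moranContraction n ^ t := by simp_rw [lintegral_moranPotential hn hY hY0]
    _ = ENNReal.ofReal ((n : ℝ) ^ 2 / 2) := tsum_moranContraction_pow hn
end
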